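/- arXiv:1510.00930 — 2 statements merged into one kernel-verified Lean document; each statement's English description precedes it below -/
import Mathlib

section
/- If two k-dimensional subspaces X, Y of V are both adjacent to a common k-dimensional subspace Z in the Grassmann graph and dim(X ∩ Y) = k - 2, then either X ∩ Y ⊂ Z (Z belongs to the 'top' of X,Y) or Z ⊂ X + Y (Z belongs to the 'star'), i.e., Z contains X ∩ Y or is contained in X + Y. -/
/-!
Inside `Z`, the subspaces `X ⊓ Z` and `Y ⊓ Z` of dimension `k - 1` meet in dimension at least
`2(k - 1) - k = k - 2`. Their meet lies in `X ⊓ Y`, which has dimension exactly `k - 2`, so the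
two coincide and `X ⊓ Y ≤ Z`: a common neighbour always lies in the top.
-/

open Module

namespace Submodule

variable {K V : Type*} [Field K] [AddCommGroup V] [Module K V] [FiniteDimensional K V]

theorem finrank_add_finrank_le_finrank_add_finrank_inf {A B Z : Submodule K V}
    (hA : A ≤ Z) (hB : B ≤ Z) :
    finrank K A + finrank K B ≤ finrank K Z + finrank K ↥(A ⊓ B) := by
  rw [← finrank_sup_add_finrank_inf_eq A B]
  exact Nat.add_le_add_right (finrank_mono (sup_le hA hB)) _

theorem inf_le_of_finrank_add_finrank_inf_le {X Y Z : Submodule K V}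
    (h : finrank K Z + finrank K ↥(X ⊓ Y) ≤ finrank K ↥(X ⊓ Z) + finrank K ↥(Y ⊓ Z)) :
    X ⊓ Y ≤ Z := by
  have hmeet : X ⊓ Z ⊓ (Y ⊓ Z) = X ⊓ Y ⊓ Z := by
    rw [inf_inf_inf_comm, inf_idem]
  have hdim := finrank_add_finrank_le_finrank_add_finrank_inf
    (inf_le_right : X ⊓ Z ≤ Z) (inf_le_right : Y ⊓ Z ≤ Z)
  rw [hmeet] at hdim
  have heq : X ⊓ Y ⊓ Z = X ⊓ Y := eq_of_le_of_finrank_le inf_le_left (by omega)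
  exact heq ▸ inf_le_right

end Submodule

theorem common_neighbor_star_or_top_general {K V : Type*} [Field K] [AddCommGroup V]
    [Module K V] [FiniteDimensional K V] {k : ℕ} (hk : 2 ≤ k)
    (X Y Z : Submodule K V)
    (hZ : finrank K ↥Z = k)
    (hXY : finrank K ↥(X ⊓ Y) = k - 2)
    (hXZ : X ≠ Z ∧ finrank K ↥(X ⊓ Z) = k - 1)
    (hYZ : Y ≠ Z ∧ finrank K ↥(Y ⊓ Z) = k - 1) :
    X ⊓ Y ≤ Z ∨ Z ≤ X ⊔ Y :=
  Or.inl <| Submodule.inf_le_of_finrank_add_finrank_inf_le <| by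
    rw [hZ, hXY, hXZ.2, hYZ.2]
    omega

theorem common_neighbor_star_or_top {K V : Type*} [Field K] [AddCommGroup V]
    [Module K V] [FiniteDimensional K V] {k : ℕ} (hk : 2 ≤ k)
    (X Y Z : Submodule K V)
    (hX : finrank K ↥X = k) (hY : finrank K ↥Y = k) (hZ : finrank K ↥Z = k)
    (hXY : finrank K ↥(X ⊓ Y) = k - 2)
    (hXZ : X ≠ Z ∧ finrank K ↥(X ⊓ Z) = k - 1)
    (hYZ : Y ≠ Z ∧ finrank K ↥(Y ⊓ Z) = k - 1) :
    X ⊓ Y ≤ Z ∨ Z ≤ X ⊔ Y :=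
  common_neighbor_star_or_top_general hk X Y Z hZ hXY hXZ hYZ
end

section
/- In an n-dimensional vector space V over a finite field, if a family of k-dimensional subspaces pairwise intersects in subspaces of dimension k-1 and the family is not contained in any star [U⟩_k with dim U = k-1, then all members of the family are contained in a common (k+1)-dimensional subspace. -/
/-!
Two distinct members `X, Y` of the clique meet in a hyperplane of each and span a
`(k+1)`-space. If a member `W` is not in `X ⊔ Y`, then `W ⊓ X` and `W ⊓ Y` are the same
hyperplane of `W` (two distinct ones would span `W`), so `W ⊓ X = X ⊓ Y`. When the clique is
not in a star, some member `Z` misses `X ⊓ Y`, hence lies in `X ⊔ Y`. A member `W` outside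
`X ⊔ Y` is then also outside `X ⊔ Z`, so `W ⊓ X` equals both `X ⊓ Y` and `X ⊓ Z`, and `Z`
would contain `X ⊓ Y`.
-/

open Module

section

variable {K V : Type*} [Field K] [AddCommGroup V] [Module K V]
  {F : Set (Submodule K V)} {m : ℕ}

theorem Submodule.exists_le_finrank_eq (X : Submodule K V) (h : m ≤ finrank K X) :
    ∃ U ≤ X, finrank K U = m := by
  obtain ⟨f, hf⟩ := exists_linearIndependent_of_le_finrank h
  refine ⟨span K (Set.range (X.subtype ∘ f)), ?_, ?_⟩
  · rw [span_le, Set.range_comp]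
    exact Set.image_subset_iff.mpr fun x _ => x.2
  · rw [finrank_span_eq_card (hf.map' X.subtype X.ker_subtype), Fintype.card_fin]

theorem exists_star_of_forall_inf_le (hV : m ≤ finrank K V)
    (hdim : ∀ X ∈ F, finrank K X = m + 1)
    (hadj : ∀ X ∈ F, ∀ Y ∈ F, X ≠ Y → finrank K ↥(X ⊓ Y) = m)
    (h : ∀ X ∈ F, ∀ Y ∈ F, X ≠ Y → ∀ Z ∈ F, X ⊓ Y ≤ Z) :
    ∃ U : Submodule K V, finrank K U = m ∧ ∀ X ∈ F, U ≤ X := by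
  rcases F.subsingleton_or_nontrivial with hF | ⟨X, hX, Y, hY, hXY⟩
  · rcases hF.eq_empty_or_singleton with rfl | ⟨X, rfl⟩
    · obtain ⟨U, -, hU⟩ :=
        (⊤ : Submodule K V).exists_le_finrank_eq (m := m) (by rwa [finrank_top])
      exact ⟨U, hU, by simp⟩
    · obtain ⟨U, hUX, hU⟩ := X.exists_le_finrank_eq (m := m) (by simp [hdim])
      exact ⟨U, hU, by simpa using hUX⟩
  · exact ⟨X ⊓ Y, hadj X hX Y hY hXY, h X hX Y hY hXY⟩

variable [FiniteDimensional K V]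

theorem Submodule.wcovBy_of_finrank_eq_add_one {A C : Submodule K V} (hAC : A ≤ C)
    (h : finrank K C = finrank K A + 1) : A ⩿ C :=
  ⟨hAC, fun _ hAB hBC => by
    have := finrank_lt_finrank_of_lt hAB
    have := finrank_lt_finrank_of_lt hBC
    omega⟩

theorem Submodule.le_sup_of_inf_ne {A B C : Submodule K V}
    (hC : finrank K C = m + 1) (hA : finrank K ↥(C ⊓ A) = m) (hB : finrank K ↥(C ⊓ B) = m)
    (hne : C ⊓ A ≠ C ⊓ B) : C ≤ A ⊔ B :=
  calc C = C ⊓ A ⊔ C ⊓ B :=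
        ((wcovBy_of_finrank_eq_add_one inf_le_left (by omega)).sup_eq
          (wcovBy_of_finrank_eq_add_one inf_le_left (by omega)) hne).symm
    _ ≤ A ⊔ B := sup_le_sup inf_le_right inf_le_right

theorem inf_eq_inf_of_not_le_sup (hdim : ∀ X ∈ F, finrank K X = m + 1)
    (hadj : ∀ X ∈ F, ∀ Y ∈ F, X ≠ Y → finrank K ↥(X ⊓ Y) = m)
    {W X Y : Submodule K V} (hW : W ∈ F) (hX : X ∈ F) (hY : Y ∈ F) (hXY : X ≠ Y)
    (hWXY : ¬ W ≤ X ⊔ Y) : W ⊓ X = X ⊓ Y := by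
  have hWX : W ≠ X := by rintro rfl; exact hWXY le_sup_left
  have hWY : W ≠ Y := by rintro rfl; exact hWXY le_sup_right
  have hsame : W ⊓ X = W ⊓ Y := by
    by_contra hne
    exact hWXY (Submodule.le_sup_of_inf_ne (hdim W hW) (hadj W hW X hX hWX)
      (hadj W hW Y hY hWY) hne)
  refine Submodule.eq_of_le_of_finrank_eq (le_inf inf_le_right (hsame ▸ inf_le_right)) ?_
  rw [hadj W hW X hX hWX, hadj X hX Y hY hXY]

theorem le_sup_of_not_inf_le (hdim : ∀ X ∈ F, finrank K X = m + 1)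
    (hadj : ∀ X ∈ F, ∀ Y ∈ F, X ≠ Y → finrank K ↥(X ⊓ Y) = m)
    {X Y Z : Submodule K V} (hX : X ∈ F) (hY : Y ∈ F) (hZ : Z ∈ F) (hXY : X ≠ Y)
    (hXYZ : ¬ X ⊓ Y ≤ Z) : ∀ W ∈ F, W ≤ X ⊔ Y := by
  have hZXY : Z ≤ X ⊔ Y := by
    by_contra hZXY
    exact hXYZ (inf_eq_inf_of_not_le_sup hdim hadj hZ hX hY hXY hZXY ▸ inf_le_left)
  have hXZ : X ≠ Z := by rintro rfl; exact hXYZ inf_le_left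
  intro W hW
  by_contra hWXY
  have hY' := inf_eq_inf_of_not_le_sup hdim hadj hW hX hY hXY hWXY
  have hZ' := inf_eq_inf_of_not_le_sup hdim hadj hW hX hZ hXZ
    fun h => hWXY (h.trans (sup_le le_sup_left hZXY))
  exact hXYZ (hY' ▸ hZ' ▸ inf_le_right)

end

theorem clique_not_in_star_contained_in_top_general {K V : Type*} [Field K]
    [AddCommGroup V] [Module K V] [FiniteDimensional K V] {n k : ℕ}
    (hn : finrank K V = n) (hk2 : k ≤ n - 1)
    (F : Set (Submodule K V)) (hdim : ∀ X ∈ F, finrank K ↥X = k)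
    (hadj : ∀ X ∈ F, ∀ Y ∈ F, X ≠ Y → finrank K ↥(X ⊓ Y) = k - 1)
    (hstar : ¬ ∃ U : Submodule K V, finrank K ↥U = k - 1 ∧ ∀ X ∈ F, U ≤ X) :
    ∃ T : Submodule K V, finrank K ↥T = k + 1 ∧ ∀ X ∈ F, X ≤ T := by
  cases k with
  | zero => exact (hstar ⟨⊥, finrank_bot K V, fun _ _ => bot_le⟩).elim
  | succ m =>
    simp only [Nat.add_sub_cancel] at hadj hstar
    obtain ⟨X, hX, Y, hY, hXY, Z, hZ, hXYZ⟩ :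
        ∃ X ∈ F, ∃ Y ∈ F, X ≠ Y ∧ ∃ Z ∈ F, ¬ X ⊓ Y ≤ Z := by
      by_contra! h
      exact hstar (exists_star_of_forall_inf_le (by omega) hdim hadj h)
    refine ⟨X ⊔ Y, ?_, le_sup_of_not_inf_le hdim hadj hX hY hZ hXY hXYZ⟩
    have := Submodule.finrank_sup_add_finrank_inf_eq X Y
    rw [hadj X hX Y hY hXY, hdim X hX, hdim Y hY] at this
    omega

theorem clique_not_in_star_contained_in_top {K V : Type*} [Field K] [Fintype K]
    [AddCommGroup V] [Module K V] [FiniteDimensional K V] {n k : ℕ}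
    (hn : finrank K V = n) (hk1 : 1 ≤ k) (hk2 : k ≤ n - 1)
    (F : Set (Submodule K V)) (hdim : ∀ X ∈ F, finrank K ↥X = k)
    (hadj : ∀ X ∈ F, ∀ Y ∈ F, X ≠ Y → finrank K ↥(X ⊓ Y) = k - 1)
    (hstar : ¬ ∃ U : Submodule K V, finrank K ↥U = k - 1 ∧ ∀ X ∈ F, U ≤ X) :
    ∃ T : Submodule K V, finrank K ↥T = k + 1 ∧ ∀ X ∈ F, X ≤ T :=
  clique_not_in_star_contained_in_top_general hn hk2 F hdim hadj hstar
end
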